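/- For the sequence x_0 = 1, x_{k+1} = x_k * (1 + ln(1 + 1/x_k)), the reciprocal sequence y_k = 1/x_k satisfies y_{k+1} = y_k / (1 + ln(1 + y_k)), and x_k / k → 1 as k → ∞. -/

import Mathlib

open Filter Topology Finset

/-! The increments `x (k + 1) - x k = t * log (1 + 1 / t)` at `t = x k` lie between `t / (t + 1)`
and `1`. The lower bound makes `x` grow at least linearly, so `x k → ∞` and the increments tend
to `lim_{t → ∞} t * log (1 + 1 / t) = 1`; by Cesàro, `x k / k` has the same limit. -/

theorem tendsto_div_natCast_of_tendsto_sub {u : ℕ → ℝ} {l : ℝ}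
    (h : Tendsto (fun n => u (n + 1) - u n) atTop (𝓝 l)) :
    Tendsto (fun n : ℕ => u n / n) atTop (𝓝 l) := by
  have telescope : ∀ n : ℕ,
      u 0 / n + (n : ℝ)⁻¹ * ∑ i ∈ range n, (u (i + 1) - u i) = u n / n := by
    intro n
    rw [sum_range_sub]
    ring
  simpa only [telescope, zero_add] using
    (tendsto_const_div_atTop_nhds_zero_nat (u 0)).add h.cesaro

theorem Real.div_add_one_le_mul_log_one_add_one_div {t : ℝ} (ht : 0 < t) :
    t / (t + 1) ≤ t * Real.log (1 + 1 / t) := by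
  have h := Real.one_sub_inv_le_log_of_pos (show 0 < 1 + 1 / t by positivity)
  have key : 1 - (1 + 1 / t)⁻¹ = 1 / (t + 1) := by
    field_simp
    ring
  rw [key] at h
  calc t / (t + 1) = t * (1 / (t + 1)) := by ring
    _ ≤ t * Real.log (1 + 1 / t) := by gcongr

section LogRecurrence

variable {x : ℕ → ℝ}

theorem sub_eq_of_log_recurrence (hrec : ∀ k, x (k + 1) = x k * (1 + Real.log (1 + 1 / x k)))
    (k : ℕ) : x (k + 1) - x k = x k * Real.log (1 + 1 / x k) := by
  rw [hrec k]
  ring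

theorem add_mul_le_of_log_recurrence (hx0 : 0 < x 0)
    (hrec : ∀ k, x (k + 1) = x k * (1 + Real.log (1 + 1 / x k))) (k : ℕ) :
    x 0 + k * (x 0 / (x 0 + 1)) ≤ x k := by
  induction k with
  | zero => simp
  | succ k ih =>
    have hx0k : x 0 ≤ x k := le_trans (le_add_of_nonneg_right (by positivity)) ih
    have hstep : x 0 / (x 0 + 1) ≤ x (k + 1) - x k := by
      rw [sub_eq_of_log_recurrence hrec]
      calc x 0 / (x 0 + 1) ≤ x k / (x k + 1) := by
            rw [div_le_div_iff₀ (by linarith) (by linarith)]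
            nlinarith
        _ ≤ _ := Real.div_add_one_le_mul_log_one_add_one_div (hx0.trans_le hx0k)
    push_cast
    linarith

theorem tendsto_atTop_of_log_recurrence (hx0 : 0 < x 0)
    (hrec : ∀ k, x (k + 1) = x k * (1 + Real.log (1 + 1 / x k))) :
    Tendsto x atTop atTop := by
  refine tendsto_atTop_mono (add_mul_le_of_log_recurrence hx0 hrec) ?_
  exact tendsto_atTop_add_const_left _ _
    (tendsto_natCast_atTop_atTop.atTop_mul_const (by positivity))

theorem tendsto_sub_of_log_recurrence (hx0 : 0 < x 0)
    (hrec : ∀ k, x (k + 1) = x k * (1 + Real.log (1 + 1 / x k))) :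
    Tendsto (fun k => x (k + 1) - x k) atTop (𝓝 1) := by
  simp_rw [sub_eq_of_log_recurrence hrec]
  exact (Real.tendsto_mul_log_one_add_div_atTop 1).comp
    (tendsto_atTop_of_log_recurrence hx0 hrec)

end LogRecurrence

theorem stmt_8 (x : ℕ → ℝ)
    (h0 : x 0 = 1)
    (hrec : ∀ k, x (k + 1) = x k * (1 + Real.log (1 + 1 / x k))) :
    (∀ k, 1 / x (k + 1) = (1 / x k) / (1 + Real.log (1 + 1 / x k))) ∧
      Tendsto (fun k : ℕ => x k / (k : ℝ)) atTop (nhds 1) := by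
  refine ⟨fun k => by rw [hrec k, div_div], ?_⟩
  have hx0 : 0 < x 0 := by rw [h0]; exact one_pos
  exact tendsto_div_natCast_of_tendsto_sub (tendsto_sub_of_log_recurrence hx0 hrec)
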